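/- Let M be a positive integer and let f_0 = h_a h'_b − h_b h'_a and f_m = h_a u_m + h_b v_m (m = 1, …, M) be polynomials in the indeterminates h_a, h_b, h'_a, h'_b, u_1, v_1, …, u_M, v_M. Then at every real point at which h_a ≠ 0, the (M+1) × (4 + 2M) Jacobian matrix of (f_0, f_1, …, f_M) (rows are the gradients with respect to all 4 + 2M variables) has rank M+1, i.e., full row rank. -/

import Mathlib

open MvPolynomial

/-- Variables for the `μ = 1/2` decodability argument: `inl 0 = h_a`, `inl 1 = h_b`,
`inl 2 = h'_a`, `inl 3 = h'_b`, `inr (m, 0) = u_m`, `inr (m, 1) = v_m`. -/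
abbrev ZfVar (M : ℕ) : Type := Fin 4 ⊕ (Fin M × Fin 2)

/-- The family `f_0 = h_a h'_b − h_b h'_a`, `f_m = h_a u_m + h_b v_m` (`m = 1, …, M`). -/
noncomputable def zfFamily (M : ℕ) : Fin (M + 1) → MvPolynomial (ZfVar M) ℝ :=
  Fin.cases
    ((X (Sum.inl 0) : MvPolynomial (ZfVar M) ℝ) * X (Sum.inl 3) -
      X (Sum.inl 1) * X (Sum.inl 2))
    (fun m : Fin M =>
      (X (Sum.inl 0) : MvPolynomial (ZfVar M) ℝ) * X (Sum.inr (m, 0)) +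
        X (Sum.inl 1) * X (Sum.inr (m, 1)))

/-!
The columns of `h'_b, u_1, …, u_M` form the `(M+1) × (M+1)` submatrix `h_a • 1` of the Jacobian:
`∂f_0/∂h'_b = ∂f_m/∂u_m = h_a`, and every other partial derivative in these columns vanishes.
So where `h_a ≠ 0` this minor is invertible, and the rank is the number of rows.
-/

theorem Matrix.rank_eq_card_height_of_isUnit_submatrix {m n R : Type*} [Fintype m] [Fintype n]
    [DecidableEq m] [CommRing R] [StrongRankCondition R] (A : Matrix m n R) (c : m → n)
    (h : IsUnit (A.submatrix id c)) : A.rank = Fintype.card m :=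
  A.rank_le_card_height.antisymm <| rank_of_isUnit _ h ▸ A.rank_submatrix_le id c

def zfPivot (M : ℕ) : Fin (M + 1) → ZfVar M :=
  Fin.cases (Sum.inl 3) fun m => Sum.inr (m, 0)

theorem pderiv_zfPivot_zfFamily (M : ℕ) (i j : Fin (M + 1)) :
    pderiv (zfPivot M j) (zfFamily M i) = if i = j then X (Sum.inl 0) else 0 := by
  cases i using Fin.cases <;> cases j using Fin.cases <;>
    simp [zfPivot, zfFamily, pderiv_X, Pi.single_apply, Fin.succ_inj, eq_comm]

theorem jacobian_zfFamily_submatrix_zfPivot (M : ℕ) (x : ZfVar M → ℝ) :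
    (Matrix.of fun (m : Fin (M + 1)) (s : ZfVar M) =>
        eval x (pderiv s (zfFamily M m))).submatrix id (zfPivot M) = x (Sum.inl 0) • 1 := by
  ext i j
  simp [pderiv_zfPivot_zfFamily, Matrix.one_apply, apply_ite (eval x)]

theorem zeroforcing_jacobian_full_row_rank_general (M : ℕ)
    (x : ZfVar M → ℝ) (hx : x (Sum.inl 0) ≠ 0) :
    Matrix.rank (Matrix.of fun (m : Fin (M + 1)) (s : ZfVar M) =>
        eval x (pderiv s (zfFamily M m))) = M + 1 := by
  have hminor : IsUnit ((Matrix.of fun (m : Fin (M + 1)) (s : ZfVar M) =>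
      eval x (pderiv s (zfFamily M m))).submatrix id (zfPivot M)) := by
    simpa [jacobian_zfFamily_submatrix_zfPivot, Matrix.isUnit_iff_isUnit_det] using hx
  rw [Matrix.rank_eq_card_height_of_isUnit_submatrix _ _ hminor, Fintype.card_fin]

/-- Let `M ≥ 1`.  At every real point at which `h_a ≠ 0`, the `(M+1) × (4 + 2M)`
Jacobian matrix of `(f_0, f_1, …, f_M)` (rows are the gradients with respect to all
`4 + 2M` variables) has rank `M + 1`, i.e. full row rank. -/
theorem zeroforcing_jacobian_full_row_rank (M : ℕ) (hM : 0 < M)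
    (x : ZfVar M → ℝ) (hx : x (Sum.inl 0) ≠ 0) :
    Matrix.rank (Matrix.of fun (m : Fin (M + 1)) (s : ZfVar M) =>
        eval x (pderiv s (zfFamily M m))) = M + 1 :=
  zeroforcing_jacobian_full_row_rank_general M x hx
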